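/- Let (𝔾,δ) be a network coding instance. For a non-source node v ∈ V \ S̄, set δ_v = min{δ_e : e an outgoing link of v} if v ∉ T, and δ_v = δ_t if v = t ∈ T. Suppose a (δ,𝔾)-NCLE exists. Then for every choice of subsets D_v of the incoming links of v with |D_v| ≤ min(2δ_v, |In(v)|) for each non-source node v, the network coding instance 𝔾′ obtained from 𝔾 by deleting the chosen links from each In(v) — i.e., replacing In(e) by In(e) \ D_{tail(e)} for every link e with tail(e) ∉ S̄, and In(t) by In(t) \ D_t for every terminal t — admits a conventional network code, i.e., a (0,𝔾′)-NCLE in which all error resistance capabilities equal 0. -/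

import Mathlib

/-!
Run the given code on every source message vector `X`. If two message vectors produce inputs
of a link `e` that differ in at most `2 δ_e` positions, some word lies within `δ_e` of both,
and the error-resilient encoder of `e` maps that word to both link symbols, which therefore
coincide; at a terminal the same argument identifies the demanded messages. Deleting at most
`2 δ_v` inputs at every node therefore only identifies message vectors that the original code
already sends to the same symbol, so every original link symbol and every demanded message
factors through the remaining inputs, and these factorizations form the new code. It is
error free because, by acyclicity, an assignment consistent with it is determined by its
source messages, hence is the run of the original code.
-/

open Finset

/-- Restriction of a vector to the coordinates in a finite index set. -/
def proj {ι 𝔽 : Type*} (A : Finset ι) (x : ι → 𝔽) : {a // a ∈ A} → 𝔽 :=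
  fun a => x a.1

/-- The input index set `In(e)` of a link `e`: the source messages assigned to
`tail e` if `tail e` is a source node, and the incoming links of `tail e`
otherwise. -/
def linkIn {V E S : Type*} [Fintype E] [Fintype S] [DecidableEq V]
    [DecidableEq S] [DecidableEq E]
    (tail head : E → V) (Sbar : Finset V) (assign : S → V) (e : E) :
    Finset (S ⊕ E) :=
  if tail e ∈ Sbar then
    (Finset.univ.filter fun s : S => assign s = tail e).image Sum.inl
  else
    (Finset.univ.filter fun e' : E => head e' = tail e).image Sum.inr

/-- The input index set `In(t)` of a terminal `t`: its incoming links. -/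
def termIn {V E S : Type*} [Fintype E] [DecidableEq V] [DecidableEq S] [DecidableEq E]
    (head : E → V) (t : V) : Finset (S ⊕ E) :=
  (Finset.univ.filter fun e' : E => head e' = t).image Sum.inr

/-- `(Fenc, Ddec)` is a (δ,𝔾)-NCLE (with input sets `In_`, `InT_`):
for every consistent assignment `x` of message and link symbols, every link
encoder outputs the correct link symbol from inputs with at most `δE e` symbol
errors, and every terminal decoder outputs its demanded source symbols from
inputs with at most `δT t` symbol errors. -/
def IsNCLE (𝔽 : Type*) [DecidableEq 𝔽] {V E S : Type*}
    (In_ : E → Finset (S ⊕ E)) (InT_ : V → Finset (S ⊕ E))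
    (Term : Finset V) (Fdem : V → Finset S) (δE : E → ℕ) (δT : V → ℕ)
    (Fenc : (e : E) → ({a // a ∈ In_ e} → 𝔽) → 𝔽)
    (Ddec : (t : {v // v ∈ Term}) → ({a // a ∈ InT_ t.1} → 𝔽) →
      ({s // s ∈ Fdem t.1} → 𝔽)) : Prop :=
  ∀ x : S ⊕ E → 𝔽, (∀ e : E, x (Sum.inr e) = Fenc e (proj (In_ e) x)) →
    (∀ (e : E) (yt : {a // a ∈ In_ e} → 𝔽),
        hammingDist (proj (In_ e) x) yt ≤ δE e → Fenc e yt = x (Sum.inr e)) ∧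
    (∀ (t : {v // v ∈ Term}) (yt : {a // a ∈ InT_ t.1} → 𝔽),
        hammingDist (proj (InT_ t.1) x) yt ≤ δT t.1 →
        Ddec t yt = fun s : {s // s ∈ Fdem t.1} => x (Sum.inl s.1))

/-- The incoming links of a node. -/
def inLinks {V E : Type*} [Fintype E] [DecidableEq V] (head : E → V) (v : V) :
    Finset E :=
  Finset.univ.filter fun e' : E => head e' = v

lemma exists_hammingDist_le_of_hammingDist_le_two_mul {ι : Type*} {β : ι → Type*} [Fintype ι]
    [∀ i, DecidableEq (β i)] {x y : ∀ i, β i} {d : ℕ} (h : hammingDist x y ≤ 2 * d) :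
    ∃ z, hammingDist x z ≤ d ∧ hammingDist y z ≤ d := by
  classical
  set D := univ.filter fun i => x i ≠ y i
  have hD : D.card ≤ 2 * d := h
  obtain ⟨D₁, hD₁, hcard⟩ := exists_subset_card_eq (Nat.sub_le D.card d)
  refine ⟨fun i => if i ∈ D₁ then y i else x i, ?_, ?_⟩
  · calc hammingDist x _ ≤ D₁.card := card_le_card fun i hi => by
          by_contra hiD₁
          simp [hiD₁] at hi
      _ ≤ d := by omega
  · calc hammingDist y _ ≤ (D \ D₁).card := card_le_card fun i hi => by
          by_cases hiD₁ : i ∈ D₁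
          · simp [hiD₁] at hi
          · simp_all [D, eq_comm]
      _ ≤ d := by rw [card_sdiff_of_subset hD₁]; omega

lemma hammingDist_proj_le_card_sdiff {ι β : Type*} [DecidableEq ι] [DecidableEq β]
    {A A' : Finset ι} {f g : ι → β} (h : ∀ a ∈ A', f a = g a) :
    hammingDist (proj A f) (proj A g) ≤ (A \ A').card :=
  calc hammingDist (proj A f) (proj A g)
      = ((univ.filter fun a : {a // a ∈ A} => f a ≠ g a).map
          (Function.Embedding.subtype _)).card := (card_map _).symm
    _ ≤ (A \ A').card := card_le_card fun a ha => by
        simp only [mem_map, mem_filter, mem_univ, true_and, Function.Embedding.subtype_apply] at ha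
        obtain ⟨⟨a, haA⟩, hfg, rfl⟩ := ha
        exact mem_sdiff.2 ⟨haA, fun haA' => hfg (h a haA')⟩

section Consistency

variable {𝔽 E S : Type*}

def IsConsistent (In_ : E → Finset (S ⊕ E))
    (Fenc : (e : E) → ({a // a ∈ In_ e} → 𝔽) → 𝔽)
    (x : S ⊕ E → 𝔽) : Prop :=
  ∀ e : E, x (Sum.inr e) = Fenc e (proj (In_ e) x)

variable {In_ : E → Finset (S ⊕ E)} {r : E → ℕ}

theorem IsConsistent.ext (hr : ∀ e e', Sum.inr e' ∈ In_ e → r e' < r e)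
    {Fenc : (e : E) → ({a // a ∈ In_ e} → 𝔽) → 𝔽} {x y : S ⊕ E → 𝔽}
    (hx : IsConsistent In_ Fenc x) (hy : IsConsistent In_ Fenc y)
    (hsrc : ∀ s, x (Sum.inl s) = y (Sum.inl s)) : x = y := by
  have hlink : ∀ e, x (Sum.inr e) = y (Sum.inr e) := fun e => by
    induction hre : r e using Nat.strong_induction_on generalizing e with
    | _ n ih =>
      rw [hx e, hy e]
      congr 1
      funext ⟨a, ha⟩
      cases a with
      | inl s => exact hsrc s
      | inr e' => exact ih _ (hre ▸ hr e e' ha) e' rfl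
  funext a
  cases a with
  | inl s => exact hsrc s
  | inr e => exact hlink e

noncomputable def evalCode (hr : ∀ e e', Sum.inr e' ∈ In_ e → r e' < r e)
    (Fenc : (e : E) → ({a // a ∈ In_ e} → 𝔽) → 𝔽) (X : S → 𝔽) : S ⊕ E → 𝔽
  | Sum.inl s => X s
  | Sum.inr e => Fenc e fun a => evalCode hr Fenc X a.1
termination_by a => Sum.elim (fun _ => 0) (fun e => r e + 1) a
decreasing_by
  obtain ⟨a, ha⟩ := a
  cases a with
  | inl s => simp
  | inr e' => simpa using hr e e' ha

theorem isConsistent_evalCode (hr : ∀ e e', Sum.inr e' ∈ In_ e → r e' < r e)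
    (Fenc : (e : E) → ({a // a ∈ In_ e} → 𝔽) → 𝔽) (X : S → 𝔽) :
    IsConsistent In_ Fenc (evalCode hr Fenc X) := fun e => by
  rw [evalCode]; rfl

@[simp]
theorem evalCode_inl (hr : ∀ e e', Sum.inr e' ∈ In_ e → r e' < r e)
    (Fenc : (e : E) → ({a // a ∈ In_ e} → 𝔽) → 𝔽) (X : S → 𝔽) (s : S) :
    evalCode hr Fenc X (Sum.inl s) = X s := by
  rw [evalCode]

end Consistency

namespace IsNCLE

variable {𝔽 V E S : Type*} [DecidableEq 𝔽]
  {In_ : E → Finset (S ⊕ E)} {InT_ : V → Finset (S ⊕ E)}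
  {Term : Finset V} {Fdem : V → Finset S} {δE : E → ℕ} {δT : V → ℕ}
  {Fenc : (e : E) → ({a // a ∈ In_ e} → 𝔽) → 𝔽}
  {Ddec : (t : {v // v ∈ Term}) → ({a // a ∈ InT_ t.1} → 𝔽) → {s // s ∈ Fdem t.1} → 𝔽}
  {x y : S ⊕ E → 𝔽}

theorem link_eq_of_hammingDist_le (hN : IsNCLE 𝔽 In_ InT_ Term Fdem δE δT Fenc Ddec)
    (hx : IsConsistent In_ Fenc x) (hy : IsConsistent In_ Fenc y) {e : E}
    (hd : hammingDist (proj (In_ e) x) (proj (In_ e) y) ≤ 2 * δE e) :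
    x (Sum.inr e) = y (Sum.inr e) := by
  obtain ⟨z, hxz, hyz⟩ := exists_hammingDist_le_of_hammingDist_le_two_mul hd
  exact ((hN x hx).1 e z hxz).symm.trans ((hN y hy).1 e z hyz)

theorem demand_eq_of_hammingDist_le (hN : IsNCLE 𝔽 In_ InT_ Term Fdem δE δT Fenc Ddec)
    (hx : IsConsistent In_ Fenc x) (hy : IsConsistent In_ Fenc y) {t : {v // v ∈ Term}}
    (hd : hammingDist (proj (InT_ t.1) x) (proj (InT_ t.1) y) ≤ 2 * δT t.1) :
    (fun s : {s // s ∈ Fdem t.1} => x (Sum.inl s.1)) = fun s => y (Sum.inl s.1) := by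
  obtain ⟨z, hxz, hyz⟩ := exists_hammingDist_le_of_hammingDist_le_two_mul hd
  exact ((hN x hx).2 t z hxz).symm.trans ((hN y hy).2 t z hyz)

theorem of_decode_eq (h : ∀ x, IsConsistent In_ Fenc x → ∀ t : {v // v ∈ Term},
      Ddec t (proj (InT_ t.1) x) = fun s => x (Sum.inl s.1)) :
    IsNCLE 𝔽 In_ InT_ Term Fdem (fun _ => 0) (fun _ => 0) Fenc Ddec := by
  intro x hx
  refine ⟨fun e y hd => ?_, fun t y hd => ?_⟩
  · rw [← hammingDist_eq_zero.1 (Nat.le_zero.1 hd)]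
    exact (hx e).symm
  · rw [← hammingDist_eq_zero.1 (Nat.le_zero.1 hd)]
    exact h x hx t

theorem exists_isNCLE_zero_of_card_sdiff_le [Nonempty 𝔽] [DecidableEq S] [DecidableEq E]
    {r : E → ℕ} (hr : ∀ e e', Sum.inr e' ∈ In_ e → r e' < r e)
    (hN : IsNCLE 𝔽 In_ InT_ Term Fdem δE δT Fenc Ddec)
    {In' : E → Finset (S ⊕ E)} {InT' : V → Finset (S ⊕ E)} (hIn : ∀ e, In' e ⊆ In_ e)
    (hcard : ∀ e, (In_ e \ In' e).card ≤ 2 * δE e)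
    (hcardT : ∀ t ∈ Term, (InT_ t \ InT' t).card ≤ 2 * δT t) :
    ∃ (Fenc' : (e : E) → ({a // a ∈ In' e} → 𝔽) → 𝔽)
      (Ddec' : (t : {v // v ∈ Term}) → ({a // a ∈ InT' t.1} → 𝔽) → {s // s ∈ Fdem t.1} → 𝔽),
      IsNCLE 𝔽 In' InT' Term Fdem (fun _ => 0) (fun _ => 0) Fenc' Ddec' := by
  set run := evalCode hr Fenc
  have hrun := isConsistent_evalCode hr Fenc
  have henc : ∀ e, Function.FactorsThrough (fun X => run X (Sum.inr e))
      (fun X => proj (In' e) (run X)) := fun e X Y hXY =>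
    hN.link_eq_of_hammingDist_le (hrun X) (hrun Y) <|
      (hammingDist_proj_le_card_sdiff fun a ha => congrFun hXY ⟨a, ha⟩).trans (hcard e)
  have hdec : ∀ t : {v // v ∈ Term},
      Function.FactorsThrough (fun X (s : {s // s ∈ Fdem t.1}) => run X (Sum.inl s.1))
        (fun X => proj (InT' t.1) (run X)) := fun t X Y hXY =>
    hN.demand_eq_of_hammingDist_le (hrun X) (hrun Y) <|
      (hammingDist_proj_le_card_sdiff fun a ha => congrFun hXY ⟨a, ha⟩).trans (hcardT t t.2)
  -- the value on inputs that no message vector produces is never used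
  let Fenc' e := Function.extend (fun X => proj (In' e) (run X)) (fun X => run X (Sum.inr e))
    fun _ => Classical.arbitrary 𝔽
  let Ddec' (t : {v // v ∈ Term}) := Function.extend (fun X => proj (InT' t.1) (run X))
    (fun X (s : {s // s ∈ Fdem t.1}) => run X (Sum.inl s.1))
    fun _ _ => Classical.arbitrary 𝔽
  have hrun' : ∀ X, IsConsistent In' Fenc' (run X) := fun X e =>
    ((henc e).extend_apply _ X).symm
  refine ⟨Fenc', Ddec', of_decode_eq fun y hy t => ?_⟩
  rw [hy.ext (fun e e' h => hr e e' (hIn e h)) (hrun' fun s => y (Sum.inl s)) (by simp [run])]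
  exact (hdec t).extend_apply _ _

end IsNCLE

lemma head_eq_of_inr_mem_linkIn {V E S : Type*} [Fintype E] [Fintype S] [DecidableEq V]
    [DecidableEq S] [DecidableEq E] (tail head : E → V) (Sbar : Finset V) (assign : S → V)
    {e e' : E} (h : Sum.inr e' ∈ linkIn tail head Sbar assign e) : head e' = tail e := by
  unfold linkIn at h
  split at h <;> simp at h; exact h

lemma card_sdiff_sdiff_le {α : Type*} [DecidableEq α] (A B : Finset α) :
    (A \ (A \ B)).card ≤ B.card :=
  card_le_card <| by rw [sdiff_sdiff_right_self]; exact inf_le_right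

theorem conventional_code_after_deletion_general
    {𝔽 : Type*} [Field 𝔽] [DecidableEq 𝔽]
    {V E S : Type*} [Fintype E] [Fintype S]
    [DecidableEq V] [DecidableEq E] [DecidableEq S]
    (tail head : E → V) (Sbar : Finset V) (assign : S → V)
    (Term : Finset V) (Fdem : V → Finset S) (δE : E → ℕ) (δT : V → ℕ)
    (hord : ∃ ord : V → ℕ, ∀ e : E, ord (tail e) < ord (head e))
    (hsrc : ∀ e : E, head e ∉ Sbar)
    (hterm : ∀ e : E, tail e ∉ Term)
    (hNCLE : ∃ (Fenc : (e : E) → ({a // a ∈ linkIn tail head Sbar assign e} → 𝔽) → 𝔽)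
        (Ddec : (t : {v // v ∈ Term}) → ({a // a ∈ termIn (S := S) head t.1} → 𝔽) →
          ({s // s ∈ Fdem t.1} → 𝔽)),
        IsNCLE 𝔽 (linkIn tail head Sbar assign) (termIn head) Term Fdem δE δT Fenc Ddec)
    (Din : V → Finset E)
    (hDterm : ∀ v : V, v ∉ Sbar → v ∈ Term →
      (Din v).card ≤ min (2 * δT v) (inLinks head v).card)
    (hDnonterm : ∀ v : V, v ∉ Sbar → v ∉ Term → ∀ e : E, tail e = v →
      (Din v).card ≤ min (2 * δE e) (inLinks head v).card) :
    ∃ (Fenc' : (e : E) → ({a // a ∈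
          (if tail e ∈ Sbar then linkIn tail head Sbar assign e
           else linkIn tail head Sbar assign e \ (Din (tail e)).image Sum.inr)} → 𝔽) → 𝔽)
      (Ddec' : (t : {v // v ∈ Term}) →
        ({a // a ∈ termIn (S := S) head t.1 \ (Din t.1).image Sum.inr} → 𝔽) →
        ({s // s ∈ Fdem t.1} → 𝔽)),
      IsNCLE 𝔽
        (fun e : E => if tail e ∈ Sbar then linkIn tail head Sbar assign e
          else linkIn tail head Sbar assign e \ (Din (tail e)).image Sum.inr)
        (fun t : V => termIn head t \ (Din t).image Sum.inr)
        Term Fdem (fun _ => 0) (fun _ => 0) Fenc' Ddec' := by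
  obtain ⟨Fenc, Ddec, hN⟩ := hNCLE
  obtain ⟨ord, hord⟩ := hord
  refine hN.exists_isNCLE_zero_of_card_sdiff_le (r := fun e => ord (head e))
    (InT' := fun t => termIn head t \ (Din t).image Sum.inr)
    (fun e e' he' => head_eq_of_inr_mem_linkIn tail head Sbar assign he' ▸ hord e)
    (fun e => ?_) (fun e => ?_) (fun t ht => ?_)
  · split_ifs <;> simp
  · split_ifs with hsource
    · simp
    · calc _ ≤ ((Din (tail e)).image Sum.inr).card := card_sdiff_sdiff_le _ _
        _ ≤ (Din (tail e)).card := card_image_le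
        _ ≤ 2 * δE e := (hDnonterm _ hsource (hterm e) e rfl).trans (min_le_left _ _)
  · by_cases hsource : t ∈ Sbar
    · have : termIn (S := S) head t = ∅ := by
        simp only [termIn, image_eq_empty, filter_eq_empty_iff]
        exact fun e' _ he' => hsrc e' (he' ▸ hsource)
      simp [this]
    · calc _ ≤ ((Din t).image Sum.inr).card := card_sdiff_sdiff_le _ _
        _ ≤ (Din t).card := card_image_le
        _ ≤ 2 * δT t := (hDterm t hsource ht).trans (min_le_left _ _)

/-- if a (δ,𝔾)-NCLE exists, then after deleting, at every
non-source node `v`, any chosen set `Din v` of at most `min(2δ_v, |In(v)|)`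
incoming links (where `δ_v = δ_t` for a terminal `v = t` and
`δ_v = min{δ_e : e outgoing from v}` otherwise), the resulting instance 𝔾′
admits a conventional network code, i.e. a (0,𝔾′)-NCLE. -/
theorem conventional_code_after_deletion
    {𝔽 : Type*} [Field 𝔽] [Fintype 𝔽] [DecidableEq 𝔽]
    {V E S : Type*} [Fintype V] [Fintype E] [Fintype S]
    [DecidableEq V] [DecidableEq E] [DecidableEq S]
    (tail head : E → V) (Sbar : Finset V) (assign : S → V)
    (Term : Finset V) (Fdem : V → Finset S) (δE : E → ℕ) (δT : V → ℕ)
    (hord : ∃ ord : V → ℕ, ∀ e : E, ord (tail e) < ord (head e))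
    (hsrc : ∀ e : E, head e ∉ Sbar)
    (hassign : ∀ s : S, assign s ∈ Sbar)
    (hterm : ∀ e : E, tail e ∉ Term)
    (hNCLE : ∃ (Fenc : (e : E) → ({a // a ∈ linkIn tail head Sbar assign e} → 𝔽) → 𝔽)
        (Ddec : (t : {v // v ∈ Term}) → ({a // a ∈ termIn (S := S) head t.1} → 𝔽) →
          ({s // s ∈ Fdem t.1} → 𝔽)),
        IsNCLE 𝔽 (linkIn tail head Sbar assign) (termIn head) Term Fdem δE δT Fenc Ddec)
    (Din : V → Finset E)
    (hDsub : ∀ v : V, v ∉ Sbar → Din v ⊆ inLinks head v)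
    (hDterm : ∀ v : V, v ∉ Sbar → v ∈ Term →
      (Din v).card ≤ min (2 * δT v) (inLinks head v).card)
    (hDnonterm : ∀ v : V, v ∉ Sbar → v ∉ Term → ∀ e : E, tail e = v →
      (Din v).card ≤ min (2 * δE e) (inLinks head v).card) :
    ∃ (Fenc' : (e : E) → ({a // a ∈
          (if tail e ∈ Sbar then linkIn tail head Sbar assign e
           else linkIn tail head Sbar assign e \ (Din (tail e)).image Sum.inr)} → 𝔽) → 𝔽)
      (Ddec' : (t : {v // v ∈ Term}) →
        ({a // a ∈ termIn (S := S) head t.1 \ (Din t.1).image Sum.inr} → 𝔽) →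
        ({s // s ∈ Fdem t.1} → 𝔽)),
      IsNCLE 𝔽
        (fun e : E => if tail e ∈ Sbar then linkIn tail head Sbar assign e
          else linkIn tail head Sbar assign e \ (Din (tail e)).image Sum.inr)
        (fun t : V => termIn head t \ (Din t).image Sum.inr)
        Term Fdem (fun _ => 0) (fun _ => 0) Fenc' Ddec' :=
  conventional_code_after_deletion_general tail head Sbar assign Term Fdem δE δT hord hsrc hterm
    hNCLE Din hDterm hDnonterm
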